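/- arXiv:2501.00123 — 2 statements merged into one kernel-verified Lean document; each statement's English description precedes it below -/
import Mathlib

section
/- Let L be a loop with a central involution a^* = μ(a)a. The following are equivalent: (a) μ(a)^* = μ(a) for all a; (b) μ(a)^2 = 1 for all a; (c) a^2 is symmetric (i.e., (a·a)^* = a·a) for all a. Moreover these conditions imply that every commutator [a,b] is a symmetric central element and [a,b]^2 = 1. -/
/-!
Applying `*` to `a^* = μ(a) a` and using that `μ(a)` is central gives `μ(a) μ(a)^* = 1`, so
`μ(a)^* = μ(a)` exactly when `μ(a)² = 1`; likewise `(a²)^* = μ(a)² a²`, so `a²` is symmetric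
exactly when `μ(a)² = 1`. Finally `(ab)^* = b^* a^*` reads `μ(ab) ab = μ(b) μ(a) ba`, hence
`[a,b] = μ(ab) μ(b) μ(a)` once `μ(ab)² = 1`, and a product of symmetric central elements of
order at most `2` is again one.
-/

universe u

class Loop (L : Type u) extends Mul L, One L where
  ldiv : L → L → L
  rdiv : L → L → L
  mul_ldiv : ∀ a b : L, a * ldiv a b = b
  ldiv_mul : ∀ a b : L, ldiv a (a * b) = b
  rdiv_mul : ∀ a b : L, rdiv b a * a = b
  mul_rdiv : ∀ a b : L, rdiv (b * a) a = b
  one_mul : ∀ a : L, 1 * a = a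
  mul_one : ∀ a : L, a * 1 = a

section Magma
variable {M : Type u} (mul : M → M → M)

/-- Left nucleus of a magma. -/
def leftNucS : Set M := {a | ∀ x y, mul (mul a x) y = mul a (mul x y)}
/-- Middle nucleus of a magma. -/
def midNucS : Set M := {a | ∀ x y, mul (mul x a) y = mul x (mul a y)}
/-- Right nucleus of a magma. -/
def rightNucS : Set M := {a | ∀ x y, mul (mul x y) a = mul x (mul y a)}
/-- Nucleus of a magma. -/
def nucS : Set M := leftNucS mul ∩ midNucS mul ∩ rightNucS mul
/-- Commutant (commutative center) of a magma. -/
def commutantS : Set M := {a | ∀ x, mul a x = mul x a}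
/-- Center of a magma: the commutant intersected with the nucleus. -/
def centerS : Set M := commutantS mul ∩ nucS mul
end Magma

namespace Loop
variable {L : Type u} [Loop L]

/-- The left inverse `a^λ`, satisfying `a^λ * a = 1`. -/
def linv (a : L) : L := Loop.rdiv 1 a
/-- The right inverse `a^ρ`, satisfying `a * a^ρ = 1`. -/
def rinv (a : L) : L := Loop.ldiv a 1
/-- The commutator `[a,b]`, defined by `a*b = (b*a)*[a,b]`. -/
def comm (a b : L) : L := Loop.ldiv (b*a) (a*b)
/-- The associator `[a,b,c]`, defined by `(a*b)*c = (a*(b*c))*[a,b,c]`. -/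
def assoc (a b c : L) : L := Loop.ldiv (a*(b*c)) ((a*b)*c)

end Loop

/-- The nucleus of a loop. -/
abbrev LNuc (L : Type u) [Loop L] : Set L := nucS (fun x y : L => x * y)
/-- The commutant of a loop. -/
abbrev LCommutant (L : Type u) [Loop L] : Set L := commutantS (fun x y : L => x * y)
/-- The center of a loop. -/
abbrev LCenter (L : Type u) [Loop L] : Set L := centerS (fun x y : L => x * y)

namespace Loop

variable {L : Type u} [Loop L]

theorem mul_left_cancel {a x y : L} (h : a * x = a * y) : x = y := by
  rw [← ldiv_mul a x, h, ldiv_mul]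

theorem mul_right_cancel {a x y : L} (h : x * a = y * a) : x = y := by
  rw [← mul_rdiv a x, h, mul_rdiv]

theorem comm_eq_of_mul_eq {a b c : L} (h : (b * a) * c = a * b) : comm a b = c := by
  rw [comm, ← h, ldiv_mul]

section Center

variable {x y z w : L}

theorem mem_center_mul_comm (hz : z ∈ LCenter L) (x : L) : z * x = x * z := hz.1 x

theorem mem_center_mul_assoc_left (hz : z ∈ LCenter L) (x y : L) :
    (z * x) * y = z * (x * y) := hz.2.1.1 x y

theorem mem_center_mul_assoc_mid (hz : z ∈ LCenter L) (x y : L) :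
    (x * z) * y = x * (z * y) := hz.2.1.2 x y

theorem mem_center_mul_assoc_right (hz : z ∈ LCenter L) (x y : L) :
    (x * y) * z = x * (y * z) := hz.2.2 x y

theorem mul_mul_mul_comm_of_mem_center (hx : x ∈ LCenter L) (hy : y ∈ LCenter L) (u v : L) :
    (x * u) * (y * v) = (x * y) * (u * v) := by
  rw [mem_center_mul_assoc_left hx, ← mem_center_mul_assoc_mid hy,
    ← mem_center_mul_comm hy u, mem_center_mul_assoc_left hy, ← mem_center_mul_assoc_left hx]

theorem mul_mem_center (hz : z ∈ LCenter L) (hw : w ∈ LCenter L) : z * w ∈ LCenter L := by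
  refine ⟨fun x => ?_, ⟨fun x y => ?_, fun x y => ?_⟩, fun x y => ?_⟩
  · show (z * w) * x = x * (z * w)
    rw [mem_center_mul_assoc_left hz, mem_center_mul_comm hw, ← mem_center_mul_assoc_left hz,
      mem_center_mul_comm hz x, mem_center_mul_assoc_mid hz]
  · show ((z * w) * x) * y = (z * w) * (x * y)
    rw [mem_center_mul_assoc_left hz, mem_center_mul_assoc_left hz,
      mem_center_mul_assoc_left hw, mem_center_mul_assoc_left hz]
  · show (x * (z * w)) * y = x * ((z * w) * y)
    rw [← mem_center_mul_assoc_mid hz, mem_center_mul_assoc_mid hw, mem_center_mul_assoc_mid hz,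
      mem_center_mul_assoc_left hz]
  · show (x * y) * (z * w) = x * (y * (z * w))
    rw [← mem_center_mul_assoc_mid hz, mem_center_mul_assoc_right hz,
      mem_center_mul_assoc_right hw, mem_center_mul_assoc_mid hz]

theorem mul_mul_self_eq_one_of_mem_center (hz : z ∈ LCenter L)
    (hzz : z * z = 1) (hww : w * w = 1) : (z * w) * (z * w) = 1 := by
  rw [mul_mul_mul_comm_of_mem_center hz hz, hzz, hww, one_mul]

theorem star_mul_eq_self_of_mem_center {star : L → L}
    (hstar : ∀ a b : L, star (a * b) = star b * star a) (hz : z ∈ LCenter L)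
    (hz' : star z = z) (hw' : star w = w) : star (z * w) = z * w := by
  rw [hstar, hz', hw', mem_center_mul_comm hz]

end Center

end Loop

open Loop

structure IsCentralInvolution {L : Type u} [Loop L] (star μ : L → L) : Prop where
  star_star : ∀ a, star (star a) = a
  star_mul : ∀ a b, star (a * b) = star b * star a
  mu_mem_center : ∀ a, μ a ∈ LCenter L
  star_eq_mu_mul : ∀ a, star a = μ a * a

namespace IsCentralInvolution

variable {L : Type u} [Loop L] {star μ : L → L}

theorem star_mem_center (h : IsCentralInvolution star μ) {z : L} (hz : z ∈ LCenter L) :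
    star z ∈ LCenter L := by
  rw [h.star_eq_mu_mul]
  exact mul_mem_center (h.mu_mem_center z) hz

theorem mu_mul_star_mu (h : IsCentralInvolution star μ) (a : L) : μ a * star (μ a) = 1 := by
  refine mul_right_cancel (a := a) ?_
  calc (μ a * star (μ a)) * a
      = (μ a * a) * star (μ a) := by
        simpa only [Loop.mul_one] using (mul_mul_mul_comm_of_mem_center (h.mu_mem_center a)
          (h.star_mem_center (h.mu_mem_center a)) a 1).symm
    _ = star (star a) := by rw [h.star_eq_mu_mul a, h.star_mul, h.star_eq_mu_mul a]
    _ = 1 * a := by rw [h.star_star, Loop.one_mul]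

theorem star_mu_eq_self_iff (h : IsCentralInvolution star μ) (a : L) :
    star (μ a) = μ a ↔ μ a * μ a = 1 := by
  constructor
  · intro hsym
    simpa only [hsym] using h.mu_mul_star_mu a
  · intro hsq
    exact mul_left_cancel ((h.mu_mul_star_mu a).trans hsq.symm)

theorem star_mul_self (h : IsCentralInvolution star μ) (a : L) :
    star (a * a) = (μ a * μ a) * (a * a) := by
  rw [h.star_mul, h.star_eq_mu_mul,
    mul_mul_mul_comm_of_mem_center (h.mu_mem_center a) (h.mu_mem_center a)]

theorem mu_mul_self_eq_one_iff (h : IsCentralInvolution star μ) (a : L) :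
    μ a * μ a = 1 ↔ star (a * a) = a * a := by
  rw [h.star_mul_self]
  constructor
  · intro hsq
    rw [hsq, Loop.one_mul]
  · intro hsym
    exact mul_right_cancel (hsym.trans (Loop.one_mul _).symm)

theorem comm_eq_mu_mul (h : IsCentralInvolution star μ) {a b : L}
    (hsq : μ (a * b) * μ (a * b) = 1) :
    comm a b = μ (a * b) * (μ b * μ a) := by
  have hm := h.mu_mem_center (a * b)
  have hn := mul_mem_center (h.mu_mem_center b) (h.mu_mem_center a)
  have hstar : μ (a * b) * (a * b) = (μ b * μ a) * (b * a) := by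
    rw [← h.star_eq_mu_mul, h.star_mul, h.star_eq_mu_mul, h.star_eq_mu_mul,
      mul_mul_mul_comm_of_mem_center (h.mu_mem_center b) (h.mu_mem_center a)]
  apply comm_eq_of_mul_eq
  rw [← mem_center_mul_comm (mul_mem_center hm hn), mem_center_mul_assoc_left hm, ← hstar,
    ← mem_center_mul_assoc_left hm, hsq, Loop.one_mul]

end IsCentralInvolution

/-- For a central involution `a^* = μ(a)·a`, the conditions
(a) `μ(a)^* = μ(a)`, (b) `μ(a)² = 1`, (c) `(a²)^* = a²` are equivalent,
and they imply that every commutator is a symmetric central element of order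
at most `2`. -/
theorem stmt7 {L : Type u} [Loop L] (star : L → L)
    (hstar2 : ∀ a : L, star (star a) = a)
    (hanti : ∀ a b : L, star (a * b) = star b * star a)
    (μ : L → L)
    (hcen : ∀ a : L, μ a ∈ LCenter L)
    (hμ : ∀ a : L, star a = μ a * a) :
    ((∀ a : L, star (μ a) = μ a) ↔ (∀ a : L, μ a * μ a = 1)) ∧
    ((∀ a : L, μ a * μ a = 1) ↔ (∀ a : L, star (a * a) = a * a)) ∧
    ((∀ a : L, star (μ a) = μ a) →
      ∀ a b : L, Loop.comm a b ∈ LCenter L ∧ star (Loop.comm a b) = Loop.comm a b ∧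
        Loop.comm a b * Loop.comm a b = 1) := by
  have h : IsCentralInvolution star μ := ⟨hstar2, hanti, hcen, hμ⟩
  refine ⟨forall_congr' h.star_mu_eq_self_iff, forall_congr' h.mu_mul_self_eq_one_iff,
    fun hsym a b => ?_⟩
  have hsq : ∀ x, μ x * μ x = 1 := fun x => (h.star_mu_eq_self_iff x).1 (hsym x)
  have hba := mul_mem_center (hcen b) (hcen a)
  rw [h.comm_eq_mu_mul (hsq (a * b))]
  exact ⟨mul_mem_center (hcen _) hba,
    star_mul_eq_self_of_mem_center hanti (hcen _) (hsym _)
      (star_mul_eq_self_of_mem_center hanti (hcen b) (hsym b) (hsym a)),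
    mul_mul_self_eq_one_of_mem_center (hcen _) (hsq _)
      (mul_mul_self_eq_one_of_mem_center (hcen b) (hsq b) (hsq a))⟩
end

section
/- Let (L,*) be a loop with involution and γ a central element. Then the Cayley-Dickson double D(L,*,γ) = L ∪ Lj, with multiplication a(bj) = (ba)j, (aj)b = (ab^*)j, (aj)(bj) = γ b^* a, is a loop, with one-sided inverses (aj)^λ = (γ^{-1}(a^λ)^*)j and (aj)^ρ = ((γ^*)^{-1}(a^λ)^*)j. Consequently, D(L,*,γ) has well-defined inverses if and only if L has well-defined inverses and γ^* = γ. -/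
universe u

/-- Multiplication of the Cayley–Dickson double `D(L,*,γ) = L ∪ Lj`,
encoded on `L × Bool` with `(a, false) = a` and `(a, true) = a·j`. -/
def CDmul {L : Type u} [Loop L] (star : L → L) (γ : L) :
    L × Bool → L × Bool → L × Bool
  | (a, false), (b, false) => (a * b, false)
  | (a, false), (b, true)  => (b * a, true)
  | (a, true),  (b, false) => (a * star b, true)
  | (a, true),  (b, true)  => (γ * (star b * a), false)

/-!
Left and right division in `D(L,*,γ)` have explicit case-by-case formulas, so the double is a
loop for every `γ` as soon as `*` is an involution fixing `1`. In any loop, inverses are well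
defined iff `a^λ = a^ρ` for all `a`. Centrality of `γ` yields the stated inverses of `aj`, so in
the double this condition splits into `a^λ = a^ρ` in `L` and
`γ^ρ (a^λ)^* = (γ^*)^ρ (a^λ)^*` for all `a`; taking `a = 1` the latter says `γ^ρ = (γ^*)^ρ`,
i.e. `γ^* = γ`.
-/

namespace Loop
variable {L : Type u} [Loop L]

theorem eq_ldiv_of_mul_eq {a z b : L} (h : a * z = b) : z = ldiv a b := by
  rw [← h, ldiv_mul]

theorem eq_rdiv_of_mul_eq {a z b : L} (h : z * a = b) : z = rdiv b a := by
  rw [← h, mul_rdiv]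

theorem existsUnique_mul_eq (a b : L) : ∃! z, a * z = b :=
  ⟨ldiv a b, mul_ldiv a b, fun _ => eq_ldiv_of_mul_eq⟩

theorem existsUnique_mul_eq_left (a b : L) : ∃! z, z * a = b :=
  ⟨rdiv b a, rdiv_mul a b, fun _ => eq_rdiv_of_mul_eq⟩

theorem linv_mul (a : L) : linv a * a = 1 := rdiv_mul a 1

theorem mul_rinv (a : L) : a * rinv a = 1 := mul_ldiv a 1

theorem eq_linv_of_mul_eq_one {a u : L} (h : u * a = 1) : u = linv a := eq_rdiv_of_mul_eq h

theorem eq_rinv_of_mul_eq_one {a v : L} (h : a * v = 1) : v = rinv a := eq_ldiv_of_mul_eq h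

theorem linv_one : linv (1 : L) = 1 := (eq_linv_of_mul_eq_one (one_mul 1)).symm

theorem rinv_injective : Function.Injective (rinv : L → L) := fun a b h => by
  rw [eq_rdiv_of_mul_eq (mul_rinv a), eq_rdiv_of_mul_eq (mul_rinv b), h]

theorem inverses_unique_iff :
    (∀ x u v : L, u * x = 1 → x * v = 1 → u = v) ↔ ∀ a : L, linv a = rinv a := by
  refine ⟨fun H a => H a _ _ (linv_mul a) (mul_rinv a), fun H x u v hu hv => ?_⟩
  rw [eq_linv_of_mul_eq_one hu, eq_rinv_of_mul_eq_one hv, H]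

theorem star_one_of_antimul {star : L → L} (hanti : ∀ a b : L, star (a * b) = star b * star a) :
    star (1 : L) = 1 := by
  have h : star (1 : L) * star 1 = star 1 * 1 := by rw [← hanti, one_mul, mul_one]
  rw [eq_ldiv_of_mul_eq h, ldiv_mul]

theorem LCenter.mul_comm {γ : L} (hγ : γ ∈ LCenter L) (x : L) : γ * x = x * γ := hγ.1 x

theorem LCenter.mul_assoc {γ : L} (hγ : γ ∈ LCenter L) (x y : L) :
    γ * x * y = γ * (x * y) := hγ.2.1.1 x y

theorem LCenter.mul_assoc_mid {γ : L} (hγ : γ ∈ LCenter L) (x y : L) :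
    x * γ * y = x * (γ * y) := hγ.2.1.2 x y

theorem LCenter.mul_mul_mul_eq_of_mul_eq_one {γ d : L} (hγ : γ ∈ LCenter L) (hd : γ * d = 1)
    (x y : L) : γ * (x * (d * y)) = x * y := by
  rw [← LCenter.mul_assoc hγ, LCenter.mul_comm hγ, LCenter.mul_assoc_mid hγ,
    ← LCenter.mul_assoc hγ, hd, one_mul]

theorem LCenter.mul_mul_mul_eq_of_mul_eq_one' {γ d : L} (hγ : γ ∈ LCenter L) (hd : γ * d = 1)
    (x y : L) : γ * (x * d * y) = x * y := by
  rw [← LCenter.mul_assoc hγ, ← LCenter.mul_assoc hγ, LCenter.mul_comm hγ,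
    LCenter.mul_assoc_mid hγ, hd, mul_one]

end Loop

section CayleyDickson
variable {L : Type u} [Loop L] (star : L → L) (γ : L)

def CDldiv : L × Bool → L × Bool → L × Bool
  | (a, false), (b, false) => (Loop.ldiv a b, false)
  | (a, false), (b, true)  => (Loop.rdiv b a, true)
  | (a, true),  (b, false) => (star (Loop.rdiv (Loop.ldiv γ b) a), true)
  | (a, true),  (b, true)  => (star (Loop.ldiv a b), false)

def CDrdiv : L × Bool → L × Bool → L × Bool
  | (b, false), (a, false) => (Loop.rdiv b a, false)
  | (b, true),  (a, false) => (Loop.rdiv b (star a), true)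
  | (b, false), (a, true)  => (Loop.ldiv (star a) (Loop.ldiv γ b), true)
  | (b, true),  (a, true)  => (Loop.ldiv a b, false)

variable {star}

theorem CDmul_CDldiv (hstar : Function.Involutive star) (x y : L × Bool) :
    CDmul star γ x (CDldiv star γ x y) = y := by
  rcases x with ⟨a, _ | _⟩ <;> rcases y with ⟨b, _ | _⟩ <;>
    simp only [CDmul, CDldiv, hstar _, Loop.mul_ldiv, Loop.rdiv_mul]

theorem CDldiv_CDmul (hstar : Function.Involutive star) (x y : L × Bool) :
    CDldiv star γ x (CDmul star γ x y) = y := by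
  rcases x with ⟨a, _ | _⟩ <;> rcases y with ⟨b, _ | _⟩ <;>
    simp only [CDmul, CDldiv, hstar _, Loop.ldiv_mul, Loop.mul_rdiv]

theorem CDmul_CDrdiv (x y : L × Bool) : CDmul star γ (CDrdiv star γ y x) x = y := by
  rcases x with ⟨a, _ | _⟩ <;> rcases y with ⟨b, _ | _⟩ <;>
    simp only [CDmul, CDrdiv, Loop.mul_ldiv, Loop.rdiv_mul]

theorem CDrdiv_CDmul (x y : L × Bool) : CDrdiv star γ (CDmul star γ y x) x = y := by
  rcases x with ⟨a, _ | _⟩ <;> rcases y with ⟨b, _ | _⟩ <;>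
    simp only [CDmul, CDrdiv, Loop.ldiv_mul, Loop.mul_rdiv]

theorem one_CDmul (x : L × Bool) : CDmul star γ (1, false) x = x := by
  rcases x with ⟨a, _ | _⟩ <;> simp only [CDmul, Loop.one_mul, Loop.mul_one]

theorem CDmul_one (hstar1 : star 1 = 1) (x : L × Bool) : CDmul star γ x (1, false) = x := by
  rcases x with ⟨a, _ | _⟩ <;> simp only [CDmul, Loop.mul_one, hstar1]

abbrev cayleyDicksonLoop (hstar : Function.Involutive star) (hstar1 : star 1 = 1) :
    Loop (L × Bool) where
  mul := CDmul star γ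
  one := (1, false)
  ldiv := CDldiv star γ
  rdiv := CDrdiv star γ
  mul_ldiv := CDmul_CDldiv γ hstar
  ldiv_mul := CDldiv_CDmul γ hstar
  rdiv_mul := CDmul_CDrdiv γ
  mul_rdiv := CDrdiv_CDmul γ
  one_mul := one_CDmul γ
  mul_one := CDmul_one γ hstar1

theorem CDmul_left_inverse_true (hanti : ∀ a b : L, star (a * b) = star b * star a)
    (hγ : γ ∈ LCenter L) (a : L) :
    CDmul star γ (Loop.rinv γ * star (Loop.linv a), true) (a, true) = (1, false) := by
  change (γ * (star a * (Loop.rinv γ * star (Loop.linv a))), false) = _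
  rw [Loop.LCenter.mul_mul_mul_eq_of_mul_eq_one hγ (Loop.mul_rinv γ), ← hanti, Loop.linv_mul,
    Loop.star_one_of_antimul hanti]

theorem CDmul_right_inverse_true (hstar : Function.Involutive star)
    (hanti : ∀ a b : L, star (a * b) = star b * star a) (hγ : γ ∈ LCenter L) (a : L) :
    CDmul star γ (a, true) (Loop.rinv (star γ) * star (Loop.linv a), true) = (1, false) := by
  have hd : γ * star (Loop.rinv (star γ)) = 1 := by
    rw [Loop.LCenter.mul_comm hγ, ← hstar γ, ← hanti, hstar, Loop.mul_rinv,
      Loop.star_one_of_antimul hanti]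
  change (γ * (star (Loop.rinv (star γ) * star (Loop.linv a)) * a), false) = _
  rw [hanti, hstar, Loop.LCenter.mul_mul_mul_eq_of_mul_eq_one' hγ hd, Loop.linv_mul]

theorem CDmul_inverses_unique_iff (hstar : Function.Involutive star)
    (hanti : ∀ a b : L, star (a * b) = star b * star a) (hγ : γ ∈ LCenter L) :
    (∀ x u v : L × Bool,
        CDmul star γ u x = (1, false) → CDmul star γ x v = (1, false) → u = v) ↔
      (∀ a : L, Loop.linv a = Loop.rinv a) ∧ star γ = γ := by
  let _ := cayleyDicksonLoop γ hstar (Loop.star_one_of_antimul hanti)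
  have linv_false (a : L) : Loop.linv ((a, false) : L × Bool) = (Loop.linv a, false) := rfl
  have rinv_false (a : L) : Loop.rinv ((a, false) : L × Bool) = (Loop.rinv a, false) := rfl
  have linv_true (a : L) :
      Loop.linv ((a, true) : L × Bool) = (Loop.rinv γ * star (Loop.linv a), true) :=
    (Loop.eq_linv_of_mul_eq_one (CDmul_left_inverse_true γ hanti hγ a)).symm
  have rinv_true (a : L) :
      Loop.rinv ((a, true) : L × Bool) = (Loop.rinv (star γ) * star (Loop.linv a), true) :=
    (Loop.eq_rinv_of_mul_eq_one (CDmul_right_inverse_true γ hstar hanti hγ a)).symm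
  have star_γ_iff : (∀ a : L, Loop.rinv γ * star (Loop.linv a) =
      Loop.rinv (star γ) * star (Loop.linv a)) ↔ star γ = γ := by
    refine ⟨fun h => Loop.rinv_injective ?_, fun h a => by rw [h]⟩
    simpa only [Loop.linv_one, Loop.star_one_of_antimul hanti, Loop.mul_one] using (h 1).symm
  refine (Loop.inverses_unique_iff (L := L × Bool)).trans ?_
  simp only [Prod.forall, Bool.forall_bool, linv_false, rinv_false, linv_true, rinv_true,
    Prod.mk.injEq, and_true, forall_and, star_γ_iff]

end CayleyDickson

/-- The Cayley–Dickson double `D(L,*,γ)` is a loop with the stated one-sided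
inverses, and has well-defined inverses iff `L` does and `γ^* = γ`. -/
theorem stmt10 {L : Type u} [Loop L] (star : L → L)
    (hstar2 : ∀ a : L, star (star a) = a)
    (hanti : ∀ a b : L, star (a * b) = star b * star a)
    (γ : L) (hγ : γ ∈ LCenter L) :
    (∀ x : L × Bool, CDmul star γ ((1 : L), false) x = x ∧
      CDmul star γ x ((1 : L), false) = x) ∧
    (∀ x y : L × Bool, ∃! z : L × Bool, CDmul star γ x z = y) ∧
    (∀ x y : L × Bool, ∃! z : L × Bool, CDmul star γ z x = y) ∧
    (∀ a : L, CDmul star γ (Loop.rinv γ * star (Loop.linv a), true) (a, true)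
        = ((1 : L), false)) ∧
    (∀ a : L, CDmul star γ (a, true) (Loop.rinv (star γ) * star (Loop.linv a), true)
        = ((1 : L), false)) ∧
    ((∀ x u v : L × Bool, CDmul star γ u x = ((1 : L), false) →
        CDmul star γ x v = ((1 : L), false) → u = v) ↔
      ((∀ a : L, Loop.linv a = Loop.rinv a) ∧ star γ = γ)) := by
  have hstar1 := Loop.star_one_of_antimul hanti
  let _ := cayleyDicksonLoop γ hstar2 hstar1
  exact ⟨fun x => ⟨one_CDmul γ x, CDmul_one γ hstar1 x⟩, Loop.existsUnique_mul_eq,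
    Loop.existsUnique_mul_eq_left, CDmul_left_inverse_true γ hanti hγ,
    CDmul_right_inverse_true γ hstar2 hanti hγ, CDmul_inverses_unique_iff γ hstar2 hanti hγ⟩
end
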